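/- Let G = (V,E) be a finite simple graph, let h : V → ℕ be injective, for each vertex u let g(u) be the minimum of h over the closed neighborhood of u, and for each nonempty A ⊆ V let f(A) := min_{u∈A} g(u). If A, B ⊆ V are nonempty, disjoint, and f(A) = f(B), then A and B are within two hops of each other: there exist a ∈ A and b ∈ B joined in G by a walk of length at most 2 (i.e., a is adjacent to b, or there is a vertex w adjacent to both a and b). -/
import Mathlib


/-- `g u`: the minimum of `h` over the closed neighborhood of `u`
(`u` together with all of its neighbors). -/
def gval {V : Type*} [Fintype V] [DecidableEq V] (G : SimpleGraph V)
    [DecidableRel G.Adj] (h : V → ℕ) (u : V) : ℕ :=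
  ((insert u (G.neighborFinset u)).image h).min'
    ((Finset.insert_nonempty u (G.neighborFinset u)).image h)

/-- The shingle `f A` of a nonempty set of vertices `A`: the minimum of `g` over `A`. -/
def fval {V : Type*} [Fintype V] [DecidableEq V] (G : SimpleGraph V)
    [DecidableRel G.Adj] (h : V → ℕ) (A : Finset V) (hA : A.Nonempty) : ℕ :=
  (A.image (gval G h)).min' (hA.image (gval G h))

/-- If `A` and `B` are nonempty, disjoint and have the same shingle, then `A` and `B`
are within two hops of each other: some `a ∈ A` and `b ∈ B` are joined by a walk of
length at most 2, i.e. `a` is adjacent to `b` or some vertex `w` is adjacent to both. -/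
theorem equal_shingles_within_two_hops
    {V : Type*} [Fintype V] [DecidableEq V] (G : SimpleGraph V) [DecidableRel G.Adj]
    (h : V → ℕ) (hinj : Function.Injective h)
    (A B : Finset V) (hA : A.Nonempty) (hB : B.Nonempty)
    (hdisj : Disjoint A B)
    (hf : fval G h A hA = fval G h B hB) :
    ∃ a ∈ A, ∃ b ∈ B, (G.Adj a b ∨ ∃ w : V, G.Adj a w ∧ G.Adj w b) := by
  -- pick a ∈ A achieving fval A, b ∈ B achieving fval B
  obtain ⟨a, ha, hga⟩ := Finset.mem_image.mp
    ((A.image (gval G h)).min'_mem (hA.image (gval G h)))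
  obtain ⟨b, hb, hgb⟩ := Finset.mem_image.mp
    ((B.image (gval G h)).min'_mem (hB.image (gval G h)))
  have hgab : gval G h a = gval G h b := by
    rw [hga, hgb]; exact hf
  -- pick x in closed nbhd of a with h x = gval a, similarly y
  obtain ⟨x, hx, hhx⟩ := Finset.mem_image.mp
    (((insert a (G.neighborFinset a)).image h).min'_mem
      ((Finset.insert_nonempty a (G.neighborFinset a)).image h))
  obtain ⟨y, hy, hhy⟩ := Finset.mem_image.mp
    (((insert b (G.neighborFinset b)).image h).min'_mem
      ((Finset.insert_nonempty b (G.neighborFinset b)).image h))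
  have hxy : x = y := hinj (by rw [hhx, hhy]; exact hgab)
  subst hxy
  refine ⟨a, ha, b, hb, ?_⟩
  rw [Finset.mem_insert, SimpleGraph.mem_neighborFinset] at hx hy
  rcases hx with rfl | hax
  · rcases hy with rfl | hby
    · exact absurd hb (Finset.disjoint_left.mp hdisj ha)
    · exact Or.inl hby.symm
  · rcases hy with rfl | hby
    · exact Or.inl hax
    · exact Or.inr ⟨x, hax, hby.symm⟩
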